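/- There exists a unique ℂ-algebra homomorphism ρ : Cl(V ⊕ W) → End_ℂ(F) such that ρ(ι(v_a ⊕ 0)) is the creation operator v_a and ρ(ι(0 ⊕ w_a)) is the annihilation operator w_a for every a ∈ H; in other words, the Fock space F of semi-infinite forms is naturally a module over the infinite-dimensional Clifford algebra Cl(V ⊕ W). -/

import Mathlib

open scoped Classical

/-- The set of half-integers `H = ℤ + 1/2`. -/
def HalfInt : Set ℚ := {q | ∃ n : ℤ, q = (n : ℚ) + 1/2}

/-- The negative half-integers `H⁻`. -/
def Hneg : Set ℚ := {q | q ∈ HalfInt ∧ q < 0}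

/-- The positive half-integers `H⁺`. -/
def Hpos : Set ℚ := {q | q ∈ HalfInt ∧ 0 < q}

/-- A Maya diagram: a set of half-integers whose symmetric difference with `H⁻` is finite. -/
structure Maya where
  carrier : Set ℚ
  subset_halfInt : carrier ⊆ HalfInt
  finite_symmDiff : (symmDiff carrier Hneg).Finite

/-- The Fock space of semi-infinite forms: the free ℂ-vector space on Maya diagrams. -/
abbrev Fock : Type := Maya →₀ ℂ

lemma symmDiff_insert_subset (a : ℚ) (S T : Set ℚ) :
    symmDiff (insert a S) T ⊆ insert a (symmDiff S T) := by
  intro x hx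
  simp only [Set.mem_symmDiff, Set.mem_insert_iff] at *
  tauto

lemma symmDiff_diff_subset (a : ℚ) (S T : Set ℚ) :
    symmDiff (S \ {a}) T ⊆ insert a (symmDiff S T) := by
  intro x hx
  simp only [Set.mem_symmDiff, Set.mem_insert_iff, Set.mem_diff,
    Set.mem_singleton_iff] at *
  tauto

/-- Adding a half-integer to a Maya diagram. -/
def Maya.insertCell (M : Maya) (a : ℚ) (ha : a ∈ HalfInt) : Maya where
  carrier := insert a M.carrier
  subset_halfInt := by
    intro x hx
    rcases hx with rfl | hx
    · exact ha
    · exact M.subset_halfInt hx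
  finite_symmDiff :=
    Set.Finite.subset (M.finite_symmDiff.insert a) (symmDiff_insert_subset a _ _)

/-- Removing a half-integer from a Maya diagram. -/
def Maya.eraseCell (M : Maya) (a : ℚ) : Maya where
  carrier := M.carrier \ {a}
  subset_halfInt := fun _ hx => M.subset_halfInt hx.1
  finite_symmDiff :=
    Set.Finite.subset (M.finite_symmDiff.insert a) (symmDiff_diff_subset a _ _)

/-- The sign `(-1)^{#{x ∈ S : x > a}}`. -/
noncomputable def sgn (S : Set ℚ) (a : ℚ) : ℂ := (-1) ^ (S ∩ Set.Ioi a).ncard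

/-- The creation operator `v_a` (exterior multiplication by `v_a`). -/
noncomputable def creation (a : ↥HalfInt) : Fock →ₗ[ℂ] Fock :=
  Finsupp.lift Fock ℂ Maya fun M =>
    if (a : ℚ) ∈ M.carrier then 0
    else sgn M.carrier a • Finsupp.single (M.insertCell a a.2) 1

/-- The annihilation operator `w_a` (contraction by `w_a`). -/
noncomputable def annihilation (a : ↥HalfInt) : Fock →ₗ[ℂ] Fock :=
  Finsupp.lift Fock ℂ Maya fun M =>
    if (a : ℚ) ∈ M.carrier then sgn M.carrier a • Finsupp.single (M.eraseCell a) 1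
    else 0

/-- The vector space `V`, free on basis `(v_a)_{a ∈ H}`. -/
abbrev Vsp : Type := ↥HalfInt →₀ ℂ

/-- The vector space `W`, free on basis `(w_a)_{a ∈ H}`. -/
abbrev Wsp : Type := ↥HalfInt →₀ ℂ

/-- The pairing `(v, w) = Σ_a x_a y_a` between `V` and `W`. -/
noncomputable def pairVW : Vsp →ₗ[ℂ] Wsp →ₗ[ℂ] ℂ :=
  Finsupp.lsum ℂ fun a => LinearMap.smulRight (LinearMap.id : ℂ →ₗ[ℂ] ℂ) (Finsupp.lapply a)

/-- The bilinear map `B((x,y),(x',y')) = Σ_a x_a y'_a` on `V ⊕ W`. -/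
noncomputable def bilinVW : (Vsp × Wsp) →ₗ[ℂ] (Vsp × Wsp) →ₗ[ℂ] ℂ :=
  (pairVW.comp (LinearMap.fst ℂ Vsp Wsp)).compl₂ (LinearMap.snd ℂ Vsp Wsp)

/-- The quadratic form `Q(x ⊕ y) = Σ_a x_a y_a` on `V ⊕ W`, so that in
`CliffordAlgebra Qform` the relations `v v' + v' v = 0`, `w w' + w' w = 0`,
`v w + w v = (v,w)·1` hold. -/
noncomputable def Qform : QuadraticForm ℂ (Vsp × Wsp) :=
  LinearMap.BilinMap.toQuadraticMap bilinVW

/-!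
Creation and annihilation are the cases `s = false` and `s = true` of one operator `toggleOp a s`,
which sends `e_M` to `± e_{M ∆ {a}}` when the occupation of `a` in `M` is `s` and kills it
otherwise. For `a ≠ b` both orders of toggling `a` and `b` reach the same diagram, and the sign
`(-1)^#{x ∈ M : x > a}` flips under toggling `b` exactly when `b > a`; as exactly one of `a < b`,
`b < a` holds, the two products have opposite signs. For `a = b`, toggling twice returns to `M`
with sign `1`, and the product survives only for opposite occupations. These anticommutation
relations extend bilinearly to `V` and `W`, so `x ⊕ y ↦ v(x) + w(y)` squares to `Q`, and the
universal property of the Clifford algebra gives existence and uniqueness of `ρ`.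
-/

open scoped symmDiff

section Anticommutation

variable {R ι κ M N A : Type*} [CommRing R] [Ring A] [Algebra R A]

theorem Finsupp.linearCombination_mul_add_mul (u : ι → A) (w : κ → A)
    (B : (ι →₀ R) →ₗ[R] (κ →₀ R) →ₗ[R] R)
    (h : ∀ i k, u i * w k + w k * u i =
      algebraMap R A (B (Finsupp.single i 1) (Finsupp.single k 1)))
    (x : ι →₀ R) (y : κ →₀ R) :
    linearCombination R u x * linearCombination R w y +
        linearCombination R w y * linearCombination R u x =
      algebraMap R A (B x y) := by
  have key : (LinearMap.mul R A).compl₁₂ (linearCombination R u) (linearCombination R w) +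
      (LinearMap.mul R A).flip.compl₁₂ (linearCombination R u) (linearCombination R w) =
      B.compr₂ (Algebra.linearMap R A) :=
    LinearMap.ext_basis Finsupp.basisSingleOne Finsupp.basisSingleOne fun i k => by
      simpa using h i k
  simpa using LinearMap.congr_fun₂ key x y

theorem Finsupp.linearCombination_mul_self_eq_zero (u : ι → A)
    (hsq : ∀ i, u i * u i = 0) (hanti : ∀ i j, u i * u j + u j * u i = 0) (x : ι →₀ R) :
    linearCombination R u x * linearCombination R u x = 0 := by
  induction x using Finsupp.induction_linear with
  | zero => simp
  | add f g hf hg =>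
    have hfg := linearCombination_mul_add_mul (R := R) u u 0 (by simpa using hanti) f g
    rw [map_add, add_mul, mul_add, mul_add, hf, hg, zero_add, add_zero, hfg]
    simp
  | single i c => simp [hsq]

theorem LinearMap.coprod_mul_self [AddCommGroup M] [Module R M] [AddCommGroup N] [Module R N]
    (f : M →ₗ[R] A) (g : N →ₗ[R] A) (B : M →ₗ[R] N →ₗ[R] R)
    (hf : ∀ x, f x * f x = 0) (hg : ∀ y, g y * g y = 0)
    (hfg : ∀ x y, f x * g y + g y * f x = algebraMap R A (B x y)) (z : M × N) :
    f.coprod g z * f.coprod g z =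
      algebraMap R A (BilinMap.toQuadraticMap ((B ∘ₗ fst R M N).compl₂ (snd R M N)) z) := by
  rw [coprod_apply, add_mul, mul_add, mul_add, hf, hg, zero_add, add_zero, hfg]
  rfl

end Anticommutation

theorem CliffordAlgebra.algHom_ext_finsupp_prod {R α β A : Type*} [CommRing R] [Semiring A]
    [Algebra R A] {Q : QuadraticForm R ((α →₀ R) × (β →₀ R))}
    {f g : CliffordAlgebra Q →ₐ[R] A}
    (hl : ∀ i, f (ι Q (Finsupp.single i 1, 0)) = g (ι Q (Finsupp.single i 1, 0)))
    (hr : ∀ k, f (ι Q (0, Finsupp.single k 1)) = g (ι Q (0, Finsupp.single k 1))) :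
    f = g :=
  hom_ext <| LinearMap.prod_ext (Finsupp.lhom_ext' fun i => LinearMap.ext_ring (hl i))
    (Finsupp.lhom_ext' fun k => LinearMap.ext_ring (hr k))

theorem Set.neg_one_pow_ncard_symmDiff_singleton {α R : Type*} [Monoid R] [HasDistribNeg R]
    {T : Set α} (hT : T.Finite) (b : α) :
    (-1 : R) ^ (T ∆ {b}).ncard = -(-1) ^ T.ncard := by
  by_cases hb : b ∈ T
  · have hdiff : T ∆ {b} = T \ {b} := by
      ext x; by_cases x = b <;> simp_all [Set.mem_symmDiff]
    rw [hdiff, ← Set.ncard_sdiff_singleton_add_one hb hT, pow_succ, mul_neg_one, neg_neg]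
  · have hins : T ∆ {b} = insert b T := by
      ext x; by_cases x = b <;> simp_all [Set.mem_symmDiff]
    rw [hins, Set.ncard_insert_of_notMem hb hT, pow_succ, mul_neg_one]

theorem sgn_symmDiff_singleton {S : Set ℚ} {a : ℚ} (hS : (S ∩ Set.Ioi a).Finite) (b : ℚ) :
    sgn (S ∆ {b}) a = (if a < b then -1 else 1) * sgn S a := by
  rw [sgn, sgn, Set.inter_symmDiff_distrib_right]
  split_ifs with hab
  · rw [Set.singleton_inter_of_mem (Set.mem_Ioi.2 hab),
      Set.neg_one_pow_ncard_symmDiff_singleton hS, neg_one_mul]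
  · rw [Set.singleton_inter_of_notMem (mt Set.mem_Ioi.1 hab), ← Set.bot_eq_empty, symmDiff_bot,
      one_mul]

theorem sgn_mul_self (S : Set ℚ) (a : ℚ) : sgn S a * sgn S a = 1 := by
  simp [sgn, ← pow_add, ← two_mul, pow_mul]

theorem finite_Hneg_inter_Ioi (a : ℚ) : (Hneg ∩ Set.Ioi a).Finite := by
  refine ((Set.finite_Ioo ⌊a - 1⌋ 0).image fun n : ℤ => (n : ℚ) + 1 / 2).subset ?_
  rintro q ⟨⟨⟨n, rfl⟩, hq0⟩, hqa⟩
  refine ⟨n, ⟨?_, ?_⟩, rfl⟩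
  · have : (⌊a - 1⌋ : ℚ) < n := (Int.floor_le _).trans_lt (by linarith [hqa.out])
    exact_mod_cast this
  · have : (n : ℚ) < 0 := by linarith
    exact_mod_cast this

namespace Maya

theorem ext {M N : Maya} (h : M.carrier = N.carrier) : M = N := by
  cases M; cases N; simpa using h

theorem finite_inter_Ioi (M : Maya) (a : ℚ) : (M.carrier ∩ Set.Ioi a).Finite := by
  refine (M.finite_symmDiff.union (finite_Hneg_inter_Ioi a)).subset ?_
  rintro x ⟨hx, hxa⟩
  by_cases h : x ∈ Hneg
  · exact Or.inr ⟨h, hxa⟩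
  · exact Or.inl (Or.inl ⟨hx, h⟩)

def toggle (M : Maya) (a : ℚ) (ha : a ∈ HalfInt) : Maya where
  carrier := M.carrier ∆ {a}
  subset_halfInt := symmDiff_le_sup.trans (Set.union_subset M.subset_halfInt (by simpa))
  finite_symmDiff := by
    rw [symmDiff_right_comm]
    exact M.finite_symmDiff.symmDiff (Set.finite_singleton a)

variable (M : Maya) {a b : ℚ} (ha : a ∈ HalfInt) (hb : b ∈ HalfInt)

theorem mem_toggle_of_ne {x : ℚ} (hx : x ≠ a) : x ∈ (M.toggle a ha).carrier ↔ x ∈ M.carrier := by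
  simp [toggle, Set.mem_symmDiff, hx]

theorem mem_toggle_self : a ∈ (M.toggle a ha).carrier ↔ a ∉ M.carrier := by
  simp [toggle, Set.mem_symmDiff]

theorem toggle_toggle : (M.toggle a ha).toggle a ha = M :=
  ext (symmDiff_symmDiff_cancel_right _ _)

theorem toggle_comm : (M.toggle a ha).toggle b hb = (M.toggle b hb).toggle a ha :=
  ext (symmDiff_right_comm _ _ _)

theorem insertCell_eq_toggle (h : a ∉ M.carrier) : M.insertCell a ha = M.toggle a ha := by
  refine ext (Set.ext fun x => ?_)
  by_cases hx : x = a
  · subst hx; simp [insertCell, toggle, Set.mem_symmDiff, h]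
  · simp [insertCell, toggle, Set.mem_symmDiff, hx]

theorem eraseCell_eq_toggle (h : a ∈ M.carrier) : M.eraseCell a = M.toggle a ha := by
  refine ext (Set.ext fun x => ?_)
  by_cases hx : x = a
  · subst hx; simp [eraseCell, toggle, Set.mem_symmDiff, h]
  · simp [eraseCell, toggle, Set.mem_symmDiff, hx]

theorem sgn_toggle : sgn (M.toggle b hb).carrier a = (if a < b then -1 else 1) * sgn M.carrier a :=
  sgn_symmDiff_singleton (M.finite_inter_Ioi a) b

end Maya

noncomputable def toggleOp (a : ↥HalfInt) (s : Bool) : Module.End ℂ Fock :=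
  Finsupp.lift Fock ℂ Maya fun M =>
    if ((a : ℚ) ∈ M.carrier ↔ s) then sgn M.carrier a • Finsupp.single (M.toggle a a.2) 1 else 0

theorem toggleOp_single (a : ↥HalfInt) (s : Bool) (M : Maya) :
    toggleOp a s (Finsupp.single M 1) =
      if ((a : ℚ) ∈ M.carrier ↔ s) then sgn M.carrier a • Finsupp.single (M.toggle a a.2) 1
      else 0 := by
  rw [toggleOp, Finsupp.lift_apply, Finsupp.sum_single_index (by simp), one_smul]

theorem creation_eq_toggleOp (a : ↥HalfInt) : creation a = toggleOp a false := by
  refine congrArg (Finsupp.lift Fock ℂ Maya) (funext fun M => ?_)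
  by_cases h : (a : ℚ) ∈ M.carrier
  · simp [h]
  · simp [h, M.insertCell_eq_toggle a.2 h]

theorem annihilation_eq_toggleOp (a : ↥HalfInt) : annihilation a = toggleOp a true := by
  refine congrArg (Finsupp.lift Fock ℂ Maya) (funext fun M => ?_)
  by_cases h : (a : ℚ) ∈ M.carrier
  · simp [h, M.eraseCell_eq_toggle a.2 h]
  · simp [h]

theorem toggleOp_toggleOp_single (a b : ↥HalfInt) (s t : Bool) (M : Maya) :
    toggleOp a s (toggleOp b t (Finsupp.single M 1)) =
      if ((b : ℚ) ∈ M.carrier ↔ t) ∧ ((a : ℚ) ∈ (M.toggle b b.2).carrier ↔ s) then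
        (sgn M.carrier b * sgn (M.toggle b b.2).carrier a) •
          Finsupp.single ((M.toggle b b.2).toggle a a.2) 1
      else 0 := by
  by_cases hb : ((b : ℚ) ∈ M.carrier ↔ t)
  · by_cases ha : ((a : ℚ) ∈ (M.toggle b b.2).carrier ↔ s)
    · rw [toggleOp_single, if_pos hb, map_smul, toggleOp_single, if_pos ha, if_pos ⟨hb, ha⟩,
        smul_smul]
    · rw [toggleOp_single, if_pos hb, map_smul, toggleOp_single, if_neg ha,
        if_neg fun h => ha h.2, smul_zero]
  · rw [toggleOp_single, if_neg hb, map_zero, if_neg fun h => hb h.1]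

theorem toggleOp_toggleOp_single_of_ne {a b : ↥HalfInt} (hab : a ≠ b) (s t : Bool) (M : Maya) :
    toggleOp a s (toggleOp b t (Finsupp.single M 1)) =
      -toggleOp b t (toggleOp a s (Finsupp.single M 1)) := by
  have hab' : (a : ℚ) ≠ b := Subtype.coe_injective.ne hab
  have hsgn : sgn M.carrier b * sgn (M.toggle b b.2).carrier a =
      -(sgn M.carrier a * sgn (M.toggle a a.2).carrier b) := by
    rcases hab'.lt_or_gt with h | h <;> simp [Maya.sgn_toggle, h, h.not_gt] <;> ring
  rw [toggleOp_toggleOp_single, toggleOp_toggleOp_single, M.mem_toggle_of_ne b.2 hab',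
    M.mem_toggle_of_ne a.2 hab'.symm, hsgn, M.toggle_comm a.2 b.2]
  by_cases h : ((a : ℚ) ∈ M.carrier ↔ s) ∧ ((b : ℚ) ∈ M.carrier ↔ t)
  · rw [if_pos h.symm, if_pos h, neg_smul]
  · rw [if_neg (mt And.symm h), if_neg h, neg_zero]

theorem toggleOp_toggleOp_single_self (a : ↥HalfInt) (s t : Bool) (M : Maya) :
    toggleOp a s (toggleOp a t (Finsupp.single M 1)) =
      if ((a : ℚ) ∈ M.carrier ↔ t) ∧ s ≠ t then Finsupp.single M 1 else 0 := by
  rw [toggleOp_toggleOp_single, M.mem_toggle_self, M.toggle_toggle, M.sgn_toggle,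
    if_neg (lt_irrefl _), one_mul, sgn_mul_self, one_smul]
  cases s <;> cases t <;> by_cases h : (a : ℚ) ∈ M.carrier <;> simp [h]

theorem toggleOp_mul_self (a : ↥HalfInt) (s : Bool) : toggleOp a s * toggleOp a s = 0 :=
  Finsupp.lhom_ext' fun M => LinearMap.ext_ring <| by simp [toggleOp_toggleOp_single_self]

theorem toggleOp_mul_add_mul (a b : ↥HalfInt) (s t : Bool) :
    toggleOp a s * toggleOp b t + toggleOp b t * toggleOp a s =
      if a = b ∧ s ≠ t then 1 else 0 := by
  refine Finsupp.lhom_ext' fun M => LinearMap.ext_ring ?_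
  simp only [LinearMap.comp_apply, Finsupp.lsingle_apply, LinearMap.add_apply,
    Module.End.mul_apply]
  by_cases hab : a = b
  · subst hab
    rw [toggleOp_toggleOp_single_self, toggleOp_toggleOp_single_self]
    cases s <;> cases t <;> by_cases h : (a : ℚ) ∈ M.carrier <;> simp [h]
  · rw [toggleOp_toggleOp_single_of_ne hab, neg_add_cancel, if_neg fun h => hab h.1,
      LinearMap.zero_apply]

theorem creation_mul_self (a : ↥HalfInt) : creation a * creation a = 0 := by
  rw [creation_eq_toggleOp, toggleOp_mul_self]

theorem annihilation_mul_self (a : ↥HalfInt) : annihilation a * annihilation a = 0 := by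
  rw [annihilation_eq_toggleOp, toggleOp_mul_self]

theorem creation_mul_add_mul (a b : ↥HalfInt) :
    creation a * creation b + creation b * creation a = 0 := by
  simp [creation_eq_toggleOp, toggleOp_mul_add_mul]

theorem annihilation_mul_add_mul (a b : ↥HalfInt) :
    annihilation a * annihilation b + annihilation b * annihilation a = 0 := by
  simp [annihilation_eq_toggleOp, toggleOp_mul_add_mul]

theorem creation_mul_add_mul_annihilation (a b : ↥HalfInt) :
    creation a * annihilation b + annihilation b * creation a = if a = b then 1 else 0 := by
  simp [creation_eq_toggleOp, annihilation_eq_toggleOp, toggleOp_mul_add_mul]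

theorem pairVW_single_single (a b : ↥HalfInt) :
    pairVW (Finsupp.single a 1) (Finsupp.single b 1) = if a = b then 1 else 0 := by
  simp [pairVW, Finsupp.single_apply, eq_comm]

noncomputable def fockRep : Vsp × Wsp →ₗ[ℂ] Module.End ℂ Fock :=
  (Finsupp.linearCombination ℂ creation).coprod (Finsupp.linearCombination ℂ annihilation)

theorem fockRep_mul_self (z : Vsp × Wsp) :
    fockRep z * fockRep z = algebraMap ℂ (Module.End ℂ Fock) (Qform z) :=
  LinearMap.coprod_mul_self (Finsupp.linearCombination ℂ creation)
    (Finsupp.linearCombination ℂ annihilation) pairVW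
    (Finsupp.linearCombination_mul_self_eq_zero _ creation_mul_self creation_mul_add_mul)
    (Finsupp.linearCombination_mul_self_eq_zero _ annihilation_mul_self
      annihilation_mul_add_mul)
    (Finsupp.linearCombination_mul_add_mul _ _ pairVW fun a b => by
      rw [creation_mul_add_mul_annihilation, pairVW_single_single]
      split_ifs <;> simp)
    z

/-- there is a unique ℂ-algebra homomorphism
`ρ : Cl(V ⊕ W) → End_ℂ(F)` with `ρ(ι(v_a ⊕ 0)) = v_a` (creation) and
`ρ(ι(0 ⊕ w_a)) = w_a` (annihilation) for every `a ∈ H`; i.e. the Fock space of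
semi-infinite forms is naturally a module over the infinite Clifford algebra. -/
theorem fock_is_clifford_module :
    ∃! ρ : CliffordAlgebra Qform →ₐ[ℂ] Module.End ℂ Fock,
      (∀ a : ↥HalfInt,
        ρ (CliffordAlgebra.ι Qform (Finsupp.single a 1, 0)) = creation a) ∧
      (∀ a : ↥HalfInt,
        ρ (CliffordAlgebra.ι Qform (0, Finsupp.single a 1)) = annihilation a) := by
  set ρ := CliffordAlgebra.lift Qform ⟨fockRep, fockRep_mul_self⟩
  have hv (a : ↥HalfInt) : ρ (CliffordAlgebra.ι Qform (Finsupp.single a 1, 0)) = creation a := by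
    simp [ρ, fockRep]
  have hw (a : ↥HalfInt) : ρ (CliffordAlgebra.ι Qform (0, Finsupp.single a 1)) =
      annihilation a := by
    simp [ρ, fockRep]
  exact ⟨ρ, ⟨hv, hw⟩, fun σ hσ => CliffordAlgebra.algHom_ext_finsupp_prod
    (fun a => (hσ.1 a).trans (hv a).symm) fun a => (hσ.2 a).trans (hw a).symm⟩
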